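/- Let d ≥ 1 be an integer, p > d+1, and set K̄(ρ) = |ρ|^{d−1} max(1,|ρ|)^{−p} for ρ ∈ ℝ. Let E ⊆ ℝ be measurable and let s⁻ < s < s⁺ be reals such that χ_E is a.e. constant on (s⁻,s) and a.e. constant on (s,s⁺). Then ∫_{s⁻}^{s} ∫_{0}^{+∞} |χ_E(u) − χ_E(u+ρ)| K̄(ρ) dρ du + ∫_{s}^{s⁺} ∫_{−∞}^{0} |χ_E(u) − χ_E(u+ρ)| K̄(ρ) dρ du ≤ ∫_{−∞}^{+∞} |ρ| K̄(ρ) dρ; that is, the one-dimensional energy defect r̃(E,s) at the critical coupling J_c is nonnegative. -/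

import Mathlib

open MeasureTheory Filter
open scoped ENNReal

noncomputable section

/-- The rescaled one-dimensional kernel `K̄_τ(ρ) = |ρ|^{d−1} max(τ^{1/(p−d−1)}, |ρ|)^{−p}`. -/
def Kbar (d : ℕ) (p τ : ℝ) (ρ : ℝ) : ℝ :=
  |ρ| ^ ((d : ℝ) - 1) * (max (τ ^ (1 / (p - d - 1))) |ρ|) ^ (-p)

/-- The indicator function of a set of reals. -/
def ind (E : Set ℝ) : ℝ → ℝ := Set.indicator E fun _ => (1 : ℝ)

/-- `χ_E` is a.e. constant on `I`. -/
def AEConstOn (E : Set ℝ) (I : Set ℝ) : Prop :=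
  ∃ c : ℝ, ∀ᵐ u ∂(volume.restrict I), ind E u = c

/-- The quantity `r_τ(E,s)` with finite neighbours `sm < s < sp`. -/
def rtau (d : ℕ) (p τ : ℝ) (E : Set ℝ) (sm s sp : ℝ) : ℝ :=
  (∫ ρ in Set.Ioo (-1 : ℝ) 1, |ρ| * Kbar d p τ ρ)
  - (∫ u in Set.Ioo sm s, ∫ ρ in Set.Ioi (0 : ℝ), |ind E (u + ρ) - ind E u| * Kbar d p τ ρ)
  - (∫ u in Set.Ioo s sp, ∫ ρ in Set.Iio (0 : ℝ), |ind E (u + ρ) - ind E u| * Kbar d p τ ρ)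

/-- The quantity `r_τ(E,s)` with possibly infinite neighbours `sm < s < sp`. -/
def rtauE (d : ℕ) (p τ : ℝ) (E : Set ℝ) (sm : EReal) (s : ℝ) (sp : EReal) : ℝ :=
  (∫ ρ in Set.Ioo (-1 : ℝ) 1, |ρ| * Kbar d p τ ρ)
  - (∫ u in {u : ℝ | sm < (u : EReal) ∧ u < s},
      ∫ ρ in Set.Ioi (0 : ℝ), |ind E (u + ρ) - ind E u| * Kbar d p τ ρ)
  - (∫ u in {u : ℝ | s < u ∧ (u : EReal) < sp},
      ∫ ρ in Set.Iio (0 : ℝ), |ind E (u + ρ) - ind E u| * Kbar d p τ ρ)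

/-- `(E,B)` is a one-dimensional set of locally finite perimeter: `B` is a closed, locally
finite set of jump points of `χ_E`. -/
def IsOneDPerimeterSet (E B : Set ℝ) : Prop :=
  MeasurableSet E ∧ IsClosed B ∧ (∀ K : Set ℝ, IsCompact K → (B ∩ K).Finite) ∧
  (∀ a b : ℝ, a < b → Set.Ioo a b ∩ B = ∅ → AEConstOn E (Set.Ioo a b)) ∧
  (∀ s ∈ B, ∀ a b : ℝ, a < s → s < b →
    Set.Ioo a s ∩ B = ∅ → Set.Ioo s b ∩ B = ∅ →
    ∀ c₁ c₂ : ℝ,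
      (∀ᵐ u ∂(volume.restrict (Set.Ioo a s)), ind E u = c₁) →
      (∀ᵐ u ∂(volume.restrict (Set.Ioo s b)), ind E u = c₂) →
      c₁ ≠ c₂)

/-- The successor `s⁺` of `s` in `B` (`+∞` if none). -/
def succPt (B : Set ℝ) (s : ℝ) : EReal :=
  sInf ((fun t : ℝ => (t : EReal)) '' {t | t ∈ B ∧ s < t})

/-- The predecessor `s⁻` of `s` in `B` (`−∞` if none). -/
def predPt (B : Set ℝ) (s : ℝ) : EReal :=
  sSup ((fun t : ℝ => (t : EReal)) '' {t | t ∈ B ∧ t < s})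

/-- `r_τ(E,s)` computed with the neighbours of `s` in the boundary `B`. -/
def rPt (d : ℕ) (p τ : ℝ) (E B : Set ℝ) (s : ℝ) : ℝ :=
  rtauE d p τ E (predPt B s) s (succPt B s)

/-- `x^{-q}` for `x : EReal`, with the convention that it vanishes at `x = +∞`. -/
def powNegE (q : ℝ) (x : EReal) : ℝ :=
  if x = ⊤ then 0 else x.toReal ^ (-q)

/-- The kernel `K̄(ρ) = |ρ|^{d−1} max(1,|ρ|)^{−p}` at the critical coupling. -/
def Kbar0 (d : ℕ) (p : ℝ) (ρ : ℝ) : ℝ :=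
  |ρ| ^ ((d : ℝ) - 1) * (max 1 |ρ|) ^ (-p)

/-! If `χ_E` is a.e. constant on `(a, b)`, then for `u ∈ (a, b)` the difference
`χ_E(u + ρ) − χ_E(u)` can be nonzero only when `u + ρ` leaves `(a, b)`, and for fixed `ρ` the
set of such `u` has length at most `|ρ|`. Since `|χ_E(u + ρ) − χ_E(u)| ≤ 1`, Tonelli bounds the
two double integrals by `∫_{ρ > 0} |ρ| K̄(ρ) dρ` and `∫_{ρ < 0} |ρ| K̄(ρ) dρ`; for `p > d + 1`
these are finite and add up to the right-hand side. -/

lemma abs_ind_sub_ind_le_one (E : Set ℝ) (x y : ℝ) : |ind E x - ind E y| ≤ 1 := by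
  unfold ind
  by_cases hx : x ∈ E <;> by_cases hy : y ∈ E <;> simp [hx, hy]

lemma Kbar0_nonneg (d : ℕ) (p : ℝ) (ρ : ℝ) : 0 ≤ Kbar0 d p ρ := by
  unfold Kbar0; positivity

lemma measurable_Kbar0 (d : ℕ) (p : ℝ) : Measurable (Kbar0 d p) := by
  unfold Kbar0; fun_prop

lemma abs_mul_Kbar0_le (d : ℕ) (p ρ : ℝ) :
    |ρ| * Kbar0 d p ρ ≤ max 1 |ρ| ^ ((d : ℝ) - p) := by
  have hm : 0 < max 1 |ρ| := lt_max_of_lt_left one_pos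
  have hpow : |ρ| * |ρ| ^ ((d : ℝ) - 1) ≤ max 1 |ρ| ^ (d : ℝ) := by
    rcases eq_or_ne ρ 0 with rfl | hρ
    · simp only [abs_zero, zero_mul]; positivity
    · rw [mul_comm, ← Real.rpow_add_one (abs_ne_zero.mpr hρ), sub_add_cancel]
      exact Real.rpow_le_rpow (abs_nonneg ρ) (le_max_right 1 |ρ|) d.cast_nonneg
  calc |ρ| * Kbar0 d p ρ = |ρ| * |ρ| ^ ((d : ℝ) - 1) * max 1 |ρ| ^ (-p) := by
        unfold Kbar0; ring
    _ ≤ max 1 |ρ| ^ (d : ℝ) * max 1 |ρ| ^ (-p) := by gcongr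
    _ = max 1 |ρ| ^ ((d : ℝ) - p) := by rw [← Real.rpow_add hm, sub_eq_add_neg]

lemma max_one_abs_rpow_neg_le {r : ℝ} (hr : 0 ≤ r) (ρ : ℝ) :
    max 1 |ρ| ^ (-r) ≤ 2 ^ r * (1 + |ρ|) ^ (-r) := by
  have hle : (1 + |ρ|) / 2 ≤ max 1 |ρ| := by
    linarith [le_max_left 1 |ρ|, le_max_right 1 |ρ|]
  calc max 1 |ρ| ^ (-r) ≤ ((1 + |ρ|) / 2) ^ (-r) :=
        Real.rpow_le_rpow_of_nonpos (by positivity) hle (neg_nonpos.mpr hr)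
    _ = 2 ^ r * (1 + |ρ|) ^ (-r) := by
        rw [Real.div_rpow (by positivity) zero_le_two, Real.rpow_neg zero_le_two, div_inv_eq_mul,
          mul_comm]

lemma integrable_abs_mul_Kbar0 (d : ℕ) {p : ℝ} (hp : (d : ℝ) + 1 < p) :
    Integrable (fun ρ : ℝ => |ρ| * Kbar0 d p ρ) := by
  have hr : (Module.finrank ℝ ℝ : ℝ) < p - d := by
    rw [Module.finrank_self, Nat.cast_one]; linarith
  refine ((integrable_one_add_norm hr).const_mul (2 ^ (p - d))).mono'
    (measurable_abs.mul (measurable_Kbar0 d p)).aestronglyMeasurable (ae_of_all _ fun ρ => ?_)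
  rw [Real.norm_of_nonneg (mul_nonneg (abs_nonneg ρ) (Kbar0_nonneg d p ρ)), Real.norm_eq_abs]
  calc |ρ| * Kbar0 d p ρ ≤ max 1 |ρ| ^ (-(p - d)) := by
        simpa only [neg_sub] using abs_mul_Kbar0_le d p ρ
    _ ≤ 2 ^ (p - d) * (1 + |ρ|) ^ (-(p - d)) := max_one_abs_rpow_neg_le (by linarith) ρ

lemma volume_setOf_add_notMem_Ioo_inter_Ioo_le (a b ρ : ℝ) :
    volume ({u | u + ρ ∉ Set.Ioo a b} ∩ Set.Ioo a b) ≤ ENNReal.ofReal |ρ| := by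
  rcases le_or_gt 0 ρ with hρ | hρ
  · calc volume ({u | u + ρ ∉ Set.Ioo a b} ∩ Set.Ioo a b) ≤ volume (Set.Ico (b - ρ) b) := by
          refine measure_mono fun u ⟨hout, hu⟩ => ⟨?_, hu.2⟩
          by_contra! h
          exact hout ⟨by linarith [hu.1], by linarith⟩
      _ = ENNReal.ofReal |ρ| := by rw [Real.volume_Ico, sub_sub_cancel, abs_of_nonneg hρ]
  · calc volume ({u | u + ρ ∉ Set.Ioo a b} ∩ Set.Ioo a b) ≤ volume (Set.Ioc a (a - ρ)) := by
          refine measure_mono fun u ⟨hout, hu⟩ => ⟨hu.1, ?_⟩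
          by_contra! h
          exact hout ⟨by linarith, by linarith [hu.2]⟩
      _ = ENNReal.ofReal |ρ| := by rw [Real.volume_Ioc, sub_sub_cancel_left, abs_of_neg hρ]

theorem lintegral_Ioo_lintegral_abs_sub_mul_le {f k : ℝ → ℝ} (hf : ∀ x y, |f x - f y| ≤ 1)
    (hk0 : ∀ ρ, 0 ≤ k ρ) (hk : Measurable k) {a b c : ℝ}
    (hc : ∀ᵐ u ∂(volume.restrict (Set.Ioo a b)), f u = c) (S : Set ℝ) :
    ∫⁻ u in Set.Ioo a b, ∫⁻ ρ in S, ENNReal.ofReal (|f (u + ρ) - f u| * k ρ)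
      ≤ ∫⁻ ρ in S, ENNReal.ofReal (|ρ| * k ρ) := by
  set W : ℝ × ℝ → ℝ≥0∞ :=
    {q | q.1 + q.2 ∉ Set.Ioo a b}.indicator fun q => ENNReal.ofReal (k q.2) with hW
  have hWm : Measurable W :=
    (ENNReal.measurable_ofReal.comp (hk.comp measurable_snd)).indicator
      (measurableSet_Ioo.preimage measurable_add).compl
  have hc' : ∀ᵐ x, x ∈ Set.Ioo a b → f x = c := (ae_restrict_iff' measurableSet_Ioo).mp hc
  have hbound : ∀ᵐ u ∂(volume.restrict (Set.Ioo a b)),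
      ∫⁻ ρ in S, ENNReal.ofReal (|f (u + ρ) - f u| * k ρ) ≤ ∫⁻ ρ in S, W (u, ρ) := by
    filter_upwards [hc] with u hu
    have hshift : ∀ᵐ ρ, u + ρ ∈ Set.Ioo a b → f (u + ρ) = c :=
      (measurePreserving_add_left volume u).quasiMeasurePreserving.ae hc'
    refine lintegral_mono_ae (ae_restrict_of_ae ?_)
    filter_upwards [hshift] with ρ hρ
    by_cases hin : u + ρ ∈ Set.Ioo a b
    · simp [hρ hin, hu]
    · rw [hW, Set.indicator_of_mem (show (u, ρ) ∈ {q : ℝ × ℝ | q.1 + q.2 ∉ Set.Ioo a b} from hin)]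
      exact ENNReal.ofReal_le_ofReal (mul_le_of_le_one_left (hk0 ρ) (hf _ _))
  have hfiber : ∀ ρ, ∫⁻ u in Set.Ioo a b, W (u, ρ) ≤ ENNReal.ofReal (|ρ| * k ρ) := fun ρ => by
    have hT : MeasurableSet {u : ℝ | u + ρ ∉ Set.Ioo a b} :=
      (measurableSet_Ioo.preimage (measurable_add_const ρ)).compl
    calc ∫⁻ u in Set.Ioo a b, W (u, ρ)
        = ∫⁻ u in Set.Ioo a b,
            {u | u + ρ ∉ Set.Ioo a b}.indicator (fun _ => ENNReal.ofReal (k ρ)) u := rfl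
      _ = ENNReal.ofReal (k ρ) * volume ({u | u + ρ ∉ Set.Ioo a b} ∩ Set.Ioo a b) := by
          rw [lintegral_indicator_const hT, Measure.restrict_apply hT]
      _ ≤ ENNReal.ofReal (k ρ) * ENNReal.ofReal |ρ| := by
          gcongr; exact volume_setOf_add_notMem_Ioo_inter_Ioo_le a b ρ
      _ = ENNReal.ofReal (|ρ| * k ρ) := by rw [mul_comm, ENNReal.ofReal_mul (abs_nonneg ρ)]
  calc ∫⁻ u in Set.Ioo a b, ∫⁻ ρ in S, ENNReal.ofReal (|f (u + ρ) - f u| * k ρ)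
      ≤ ∫⁻ u in Set.Ioo a b, ∫⁻ ρ in S, W (u, ρ) := lintegral_mono_ae hbound
    _ = ∫⁻ ρ in S, ∫⁻ u in Set.Ioo a b, W (u, ρ) :=
        lintegral_lintegral_swap hWm.aemeasurable
    _ ≤ ∫⁻ ρ in S, ENNReal.ofReal (|ρ| * k ρ) := lintegral_mono hfiber

lemma ofReal_integral_le_lintegral_ofReal {α : Type*} [MeasurableSpace α] {μ : Measure α}
    {f : α → ℝ} (hf : ∀ x, 0 ≤ f x) :
    ENNReal.ofReal (∫ x, f x ∂μ) ≤ ∫⁻ x, ENNReal.ofReal (f x) ∂μ := by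
  rw [← Real.enorm_of_nonneg (integral_nonneg hf)]
  simpa only [Real.enorm_of_nonneg (hf _)] using enorm_integral_le_lintegral_enorm f

lemma ofReal_integral_integral_le_lintegral_lintegral {α β : Type*} [MeasurableSpace α]
    [MeasurableSpace β] {μ : Measure α} {ν : Measure β} {F : α → β → ℝ}
    (hF : ∀ x y, 0 ≤ F x y) :
    ENNReal.ofReal (∫ x, ∫ y, F x y ∂ν ∂μ) ≤ ∫⁻ x, ∫⁻ y, ENNReal.ofReal (F x y) ∂ν ∂μ :=
  (ofReal_integral_le_lintegral_ofReal fun x => integral_nonneg (hF x)).trans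
    (lintegral_mono fun x => ofReal_integral_le_lintegral_ofReal (hF x))

theorem statement4_general (d : ℕ) (p : ℝ) (hp : (d : ℝ) + 1 < p)
    (E : Set ℝ) (sm s sp : ℝ)
    (hc1 : AEConstOn E (Set.Ioo sm s)) (hc2 : AEConstOn E (Set.Ioo s sp)) :
    (∫ u in Set.Ioo sm s, ∫ ρ in Set.Ioi (0 : ℝ), |ind E (u + ρ) - ind E u| * Kbar0 d p ρ)
    + (∫ u in Set.Ioo s sp, ∫ ρ in Set.Iio (0 : ℝ), |ind E (u + ρ) - ind E u| * Kbar0 d p ρ)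
    ≤ ∫ ρ : ℝ, |ρ| * Kbar0 d p ρ := by
  obtain ⟨c₁, hc₁⟩ := hc1
  obtain ⟨c₂, hc₂⟩ := hc2
  have hF : ∀ u ρ, 0 ≤ |ind E (u + ρ) - ind E u| * Kbar0 d p ρ :=
    fun u ρ => mul_nonneg (abs_nonneg _) (Kbar0_nonneg d p ρ)
  have hG : ∀ ρ, 0 ≤ |ρ| * Kbar0 d p ρ := fun ρ => mul_nonneg (abs_nonneg ρ) (Kbar0_nonneg d p ρ)
  have hleft := (ofReal_integral_integral_le_lintegral_lintegral hF).trans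
    (lintegral_Ioo_lintegral_abs_sub_mul_le (abs_ind_sub_ind_le_one E) (Kbar0_nonneg d p)
      (measurable_Kbar0 d p) hc₁ (Set.Ioi 0))
  have hright := (ofReal_integral_integral_le_lintegral_lintegral hF).trans
    (lintegral_Ioo_lintegral_abs_sub_mul_le (abs_ind_sub_ind_le_one E) (Kbar0_nonneg d p)
      (measurable_Kbar0 d p) hc₂ (Set.Iio 0))
  have hsplit : (∫⁻ ρ in Set.Ioi 0, ENNReal.ofReal (|ρ| * Kbar0 d p ρ))
      + ∫⁻ ρ in Set.Iio 0, ENNReal.ofReal (|ρ| * Kbar0 d p ρ)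
      ≤ ∫⁻ ρ, ENNReal.ofReal (|ρ| * Kbar0 d p ρ) :=
    (lintegral_union measurableSet_Iio Set.Ioi_disjoint_Iio_same).symm.trans_le
      (setLIntegral_le_lintegral _ _)
  rw [← ENNReal.ofReal_le_ofReal_iff (integral_nonneg hG),
    ENNReal.ofReal_add (integral_nonneg fun u => integral_nonneg (hF u))
      (integral_nonneg fun u => integral_nonneg (hF u)),
    ofReal_integral_eq_lintegral_ofReal (integrable_abs_mul_Kbar0 d hp) (ae_of_all _ hG)]
  exact (add_le_add hleft hright).trans hsplit

/-- Nonnegativity of the one-dimensional energy defect at the critical coupling `J_c`. -/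
theorem statement4 (d : ℕ) (hd : 1 ≤ d) (p : ℝ) (hp : (d : ℝ) + 1 < p)
    (E : Set ℝ) (hE : MeasurableSet E) (sm s sp : ℝ) (h1 : sm < s) (h2 : s < sp)
    (hc1 : AEConstOn E (Set.Ioo sm s)) (hc2 : AEConstOn E (Set.Ioo s sp)) :
    (∫ u in Set.Ioo sm s, ∫ ρ in Set.Ioi (0 : ℝ), |ind E (u + ρ) - ind E u| * Kbar0 d p ρ)
    + (∫ u in Set.Ioo s sp, ∫ ρ in Set.Iio (0 : ℝ), |ind E (u + ρ) - ind E u| * Kbar0 d p ρ)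
    ≤ ∫ ρ : ℝ, |ρ| * Kbar0 d p ρ :=
  statement4_general d p hp E sm s sp hc1 hc2
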